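/- arXiv:1506.07691 — 7 statements merged into one kernel-verified Lean document; each statement's English description precedes it below -/
import Mathlib

section
/- Let X, Y, Z be Banach spaces, T ∈ B(X,Y), U ∈ B(X,Z). If T majorizes U (i.e., there exists γ > 0 with ‖Uf‖ ≤ γ‖Tf‖ for all f ∈ X) and the closure of the range of T is complemented in Y, then there exists a bounded operator Q ∈ B(Y,Z) such that U = QT. -/
/-!
Majorization `‖U f‖ ≤ γ ‖T f‖` makes `T f ↦ U f` a well-defined bounded linear map on the range
of `T`; as `Z` is complete it extends by continuity to the closure of the range, and composing
the extension with a continuous projection of `Y` onto that closure gives `Q`.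
-/

namespace ContinuousLinearMap

variable {𝕜 X Y Z : Type*} [NontriviallyNormedField 𝕜]
  [NormedAddCommGroup X] [NormedSpace 𝕜 X] [NormedAddCommGroup Y] [NormedSpace 𝕜 Y]
  [NormedAddCommGroup Z] [NormedSpace 𝕜 Z]

def codRestrictRangeClosure (T : X →L[𝕜] Y) :
    X →L[𝕜] (LinearMap.range (T : X →ₗ[𝕜] Y)).topologicalClosure :=
  T.codRestrict _ fun x ↦ Submodule.le_topologicalClosure _ ⟨x, rfl⟩

theorem denseRange_codRestrictRangeClosure (T : X →L[𝕜] Y) :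
    DenseRange T.codRestrictRangeClosure := by
  rw [DenseRange, Subtype.dense_iff, ← Set.range_comp]
  exact (Submodule.topologicalClosure_coe _).le

theorem exists_comp_codRestrictRangeClosure_eq_of_norm_le [CompleteSpace Z]
    (T : X →L[𝕜] Y) (U : X →L[𝕜] Z) (hU : ∃ C, ∀ x, ‖U x‖ ≤ C * ‖T x‖) :
    ∃ S : (LinearMap.range (T : X →ₗ[𝕜] Y)).topologicalClosure →L[𝕜] Z,
      S.comp T.codRestrictRangeClosure = U := by
  refine ⟨(U : X →ₗ[𝕜] Z).extendOfNorm (T.codRestrictRangeClosure : X →ₗ[𝕜] _), ext fun x ↦ ?_⟩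
  exact LinearMap.extendOfNorm_eq T.denseRange_codRestrictRangeClosure hU x

theorem exists_eq_comp_of_norm_le_of_closedComplemented [CompleteSpace Z]
    (T : X →L[𝕜] Y) (U : X →L[𝕜] Z) (hU : ∃ C, ∀ x, ‖U x‖ ≤ C * ‖T x‖)
    (hT : (LinearMap.range (T : X →ₗ[𝕜] Y)).topologicalClosure.ClosedComplemented) :
    ∃ Q : Y →L[𝕜] Z, U = Q.comp T := by
  obtain ⟨P, hP⟩ := hT
  obtain ⟨S, rfl⟩ := exists_comp_codRestrictRangeClosure_eq_of_norm_le T U hU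
  exact ⟨S.comp P, ext fun x ↦ congrArg S (hP (T.codRestrictRangeClosure x)).symm⟩

end ContinuousLinearMap

theorem majorize_factorization_general {X Y Z : Type*}
    [NormedAddCommGroup X] [NormedSpace ℂ X]
    [NormedAddCommGroup Y] [NormedSpace ℂ Y]
    [NormedAddCommGroup Z] [NormedSpace ℂ Z] [CompleteSpace Z]
    (T : X →L[ℂ] Y) (U : X →L[ℂ] Z) (γ : ℝ)
    (hmaj : ∀ f : X, ‖U f‖ ≤ γ * ‖T f‖)
    (hcompl : Submodule.ClosedComplemented
      ((LinearMap.range (T : X →ₗ[ℂ] Y)).topologicalClosure)) :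
    ∃ Q : Y →L[ℂ] Z, U = Q.comp T :=
  T.exists_eq_comp_of_norm_le_of_closedComplemented U ⟨γ, hmaj⟩ hcompl

/-- If `T` majorizes `U` and the closure of the range of `T` is complemented,
then `U` factors through `T`. -/
theorem majorize_factorization {X Y Z : Type*}
    [NormedAddCommGroup X] [NormedSpace ℂ X] [CompleteSpace X]
    [NormedAddCommGroup Y] [NormedSpace ℂ Y] [CompleteSpace Y]
    [NormedAddCommGroup Z] [NormedSpace ℂ Z] [CompleteSpace Z]
    (T : X →L[ℂ] Y) (U : X →L[ℂ] Z) (γ : ℝ) (hγ : 0 < γ)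
    (hmaj : ∀ f : X, ‖U f‖ ≤ γ * ‖T f‖)
    (hcompl : Submodule.ClosedComplemented
      ((LinearMap.range (T : X →ₗ[ℂ] Y)).topologicalClosure)) :
    ∃ Q : Y →L[ℂ] Z, U = Q.comp T :=
  majorize_factorization_general T U γ hmaj hcompl
end

section
/- Let X, Y, Z be Banach spaces, T ∈ B(X,Y) and U ∈ B(X,Z). If T majorizes U, then the range of the adjoint U* is contained in the range of the adjoint T*. -/
open scoped ComplexConjugate
open Filter Topology

/-- A compatible semi-inner product on a complex normed space. -/
structure CompatSIP (X : Type*) [NormedAddCommGroup X] [NormedSpace ℂ X] where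
  sip : X → X → ℂ
  add_left : ∀ f g h : X, sip (f + g) h = sip f h + sip g h
  smul_left : ∀ (a : ℂ) (f g : X), sip (a • f) g = a * sip f g
  smul_right : ∀ (a : ℂ) (f g : X), sip f (a • g) = conj a * sip f g
  compat : ∀ f : X, sip f f = (‖f‖ : ℂ) ^ 2
  cauchy_schwarz : ∀ f g : X, ‖sip f g‖ ≤ ‖f‖ * ‖g‖

/-- The dual element `f*` of `f`, i.e. the bounded functional `g ↦ [g, f]`. -/
noncomputable def CompatSIP.dual {X : Type*} [NormedAddCommGroup X] [NormedSpace ℂ X]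
    (S : CompatSIP X) (f : X) : StrongDual ℂ X :=
  LinearMap.mkContinuous
    { toFun := fun g => S.sip g f
      map_add' := fun g h => S.add_left g h f
      map_smul' := fun a g => S.smul_left a g f }
    ‖f‖ (fun g => by
      calc ‖S.sip g f‖ ≤ ‖g‖ * ‖f‖ := S.cauchy_schwarz g f
        _ = ‖f‖ * ‖g‖ := mul_comm _ _)

/-- The Banach-space adjoint `T* : Y* → X*` of a bounded operator `T : X → Y`. -/
noncomputable def opDual {X Y : Type*} [NormedAddCommGroup X] [NormedSpace ℂ X]
    [NormedAddCommGroup Y] [NormedSpace ℂ Y] (T : X →L[ℂ] Y) :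
    StrongDual ℂ Y →L[ℂ] StrongDual ℂ X :=
  LinearMap.mkContinuous
    { toFun := fun φ => φ.comp T
      map_add' := fun φ ψ => ContinuousLinearMap.add_comp φ ψ T
      map_smul' := fun a φ => ContinuousLinearMap.smul_comp a φ T }
    ‖T‖ (fun φ => by
      calc ‖φ.comp T‖ ≤ ‖φ‖ * ‖T‖ := ContinuousLinearMap.opNorm_comp_le φ T
        _ = ‖T‖ * ‖φ‖ := mul_comm _ _)

@[simp] lemma opDual_apply {X Y : Type*} [NormedAddCommGroup X] [NormedSpace ℂ X]
    [NormedAddCommGroup Y] [NormedSpace ℂ Y] (T : X →L[ℂ] Y)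
    (φ : StrongDual ℂ Y) (x : X) : opDual T φ x = φ (T x) := rfl

/-- Convergence of the series `∑ v j` (in the Schauder/ordered sense) to `s`. -/
def SumsTo {X : Type*} [NormedAddCommGroup X] (v : ℕ → X) (s : X) : Prop :=
  Tendsto (fun n => ∑ j ∈ Finset.range n, v j) atTop (𝓝 s)

namespace LinearMap

theorem exists_comp_rangeRestrict_eq_of_ker_le {R M N P : Type*} [Ring R]
    [AddCommGroup M] [Module R M] [AddCommGroup N] [Module R N] [AddCommGroup P] [Module R P]
    {f : M →ₗ[R] N} {g : M →ₗ[R] P} (hfg : ker f ≤ ker g) :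
    ∃ h : range f →ₗ[R] P, h ∘ₗ f.rangeRestrict = g :=
  ⟨(ker f).liftQ g hfg ∘ₗ f.quotKerEquivRange.symm.toLinearMap,
    LinearMap.ext fun x => by
      simp [rangeRestrict, codRestrict]⟩

/-- `ξ` descends to a functional on `range T` that is bounded there, and Hahn–Banach extends it. -/
theorem exists_strongDual_comp_eq_of_norm_le {𝕜 E F : Type*} [RCLike 𝕜]
    [AddCommGroup E] [Module 𝕜 E] [SeminormedAddCommGroup F] [NormedSpace 𝕜 F]
    (T : E →ₗ[𝕜] F) (ξ : E →ₗ[𝕜] 𝕜) (C : ℝ) (hξ : ∀ x, ‖ξ x‖ ≤ C * ‖T x‖) :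
    ∃ ψ : StrongDual 𝕜 F, ψ.toLinearMap ∘ₗ T = ξ := by
  have hker : ker T ≤ ker ξ := fun x hx => by
    simpa [mem_ker.mp hx] using hξ x
  obtain ⟨ℓ, hℓ⟩ := exists_comp_rangeRestrict_eq_of_ker_le hker
  have hbound : ∀ y, ‖ℓ y‖ ≤ C * ‖y‖ := by
    rintro ⟨_, x, rfl⟩
    exact (congrArg (‖·‖) (LinearMap.congr_fun hℓ x)).trans_le (hξ x)
  obtain ⟨ψ, hψ, -⟩ := exists_extension_norm_eq _ (ℓ.mkContinuous C hbound)
  exact ⟨ψ, LinearMap.ext fun x => by simpa [← hℓ] using hψ (T.rangeRestrict x)⟩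

end LinearMap

theorem majorize_adjoint_range_general {X Y Z : Type*}
    [NormedAddCommGroup X] [NormedSpace ℂ X]
    [NormedAddCommGroup Y] [NormedSpace ℂ Y]
    [NormedAddCommGroup Z] [NormedSpace ℂ Z]
    (T : X →L[ℂ] Y) (U : X →L[ℂ] Z) (γ : ℝ)
    (hmaj : ∀ f : X, ‖U f‖ ≤ γ * ‖T f‖) :
    Set.range (opDual U) ⊆ Set.range (opDual T) := by
  rintro _ ⟨φ, rfl⟩
  have hdom : ∀ f, ‖φ (U f)‖ ≤ ‖φ‖ * γ * ‖T f‖ := fun f =>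
    calc ‖φ (U f)‖ ≤ ‖φ‖ * ‖U f‖ := φ.le_opNorm (U f)
      _ ≤ ‖φ‖ * γ * ‖T f‖ := by rw [mul_assoc]; gcongr; exact hmaj f
  obtain ⟨ψ, hψ⟩ := LinearMap.exists_strongDual_comp_eq_of_norm_le (T : X →ₗ[ℂ] Y)
    (φ.comp U : X →ₗ[ℂ] ℂ) _ hdom
  exact ⟨ψ, ContinuousLinearMap.ext (LinearMap.congr_fun hψ)⟩

/-- If `T` majorizes `U` then `R(U*) ⊆ R(T*)`. -/
theorem majorize_adjoint_range {X Y Z : Type*}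
    [NormedAddCommGroup X] [NormedSpace ℂ X] [CompleteSpace X]
    [NormedAddCommGroup Y] [NormedSpace ℂ Y] [CompleteSpace Y]
    [NormedAddCommGroup Z] [NormedSpace ℂ Z] [CompleteSpace Z]
    (T : X →L[ℂ] Y) (U : X →L[ℂ] Z) (γ : ℝ) (hγ : 0 < γ)
    (hmaj : ∀ f : X, ‖U f‖ ≤ γ * ‖T f‖) :
    Set.range (opDual U) ⊆ Set.range (opDual T) :=
  majorize_adjoint_range_general T U γ hmaj
end

section
/- Let X, Y, Z be Banach spaces, T ∈ B(X,Y), V ∈ B(Z,Y). If R(V) ⊆ R(T), then T* majorizes V*, i.e., there exists γ > 0 with ‖V*g*‖ ≤ γ‖T*g*‖ for all g* ∈ Y*. -/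
open scoped ComplexConjugate
open Filter Topology

/-!
The pairs `(x, z)` with `T x = V z` form a closed subspace `W` of the Banach space `X × Z`, and
`R(V) ⊆ R(T)` says exactly that the projection `W → Z` is onto. The open mapping theorem then
yields, for every `z`, some `x` with `T x = V z` and `‖x‖ ≤ C ‖z‖`, whence
`|g* (V z)| = |(T* g*) x| ≤ C ‖T* g*‖ ‖z‖`.
-/

namespace ContinuousLinearMap

variable {𝕜 X Y Z : Type*} [NontriviallyNormedField 𝕜]
  [NormedAddCommGroup X] [NormedSpace 𝕜 X]
  [NormedAddCommGroup Y] [NormedSpace 𝕜 Y]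
  [NormedAddCommGroup Z] [NormedSpace 𝕜 Z]

theorem exists_preimage_norm_le_of_range_subset [CompleteSpace X] [CompleteSpace Z]
    (T : X →L[𝕜] Y) (V : Z →L[𝕜] Y) (hrange : Set.range V ⊆ Set.range T) :
    ∃ C > 0, ∀ z, ∃ x, T x = V z ∧ ‖x‖ ≤ C * ‖z‖ := by
  let W : Submodule 𝕜 (X × Z) :=
    LinearMap.ker ((T.comp (.fst 𝕜 X Z) - V.comp (.snd 𝕜 X Z) : X × Z →L[𝕜] Y) : X × Z →ₗ[𝕜] Y)
  have : CompleteSpace W := (isClosed_ker _).completeSpace_coe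
  let π : W →L[𝕜] Z := (snd 𝕜 X Z).comp W.subtypeL
  have hπ : Function.Surjective π := fun z => by
    obtain ⟨x, hx⟩ := hrange ⟨z, rfl⟩
    exact ⟨⟨(x, z), by simp [W, hx]⟩, rfl⟩
  obtain ⟨C, hC, hlift⟩ := π.exists_preimage_norm_le hπ
  refine ⟨C, hC, fun z => ?_⟩
  obtain ⟨⟨⟨x, z'⟩, hxz⟩, hz, hnorm⟩ := hlift z
  obtain rfl : z' = z := hz
  exact ⟨x, by simpa [W, sub_eq_zero] using hxz, (le_max_left _ _).trans hnorm⟩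

theorem norm_comp_le_of_exists_preimage_norm_le {E : Type*} [NormedAddCommGroup E]
    [NormedSpace 𝕜 E] {T : X →L[𝕜] Y} {V : Z →L[𝕜] Y} {C : ℝ} (hC : 0 ≤ C)
    (hlift : ∀ z, ∃ x, T x = V z ∧ ‖x‖ ≤ C * ‖z‖) (φ : Y →L[𝕜] E) :
    ‖φ.comp V‖ ≤ C * ‖φ.comp T‖ := by
  refine opNorm_le_bound _ (by positivity) fun z => ?_
  obtain ⟨x, hx, hnorm⟩ := hlift z
  calc ‖φ (V z)‖ = ‖(φ.comp T) x‖ := by rw [comp_apply, hx]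
    _ ≤ ‖φ.comp T‖ * ‖x‖ := le_opNorm _ x
    _ ≤ ‖φ.comp T‖ * (C * ‖z‖) := by gcongr
    _ = C * ‖φ.comp T‖ * ‖z‖ := by ring

end ContinuousLinearMap

theorem range_subset_adjoint_majorize_general {X Y Z : Type*}
    [NormedAddCommGroup X] [NormedSpace ℂ X] [CompleteSpace X]
    [NormedAddCommGroup Y] [NormedSpace ℂ Y]
    [NormedAddCommGroup Z] [NormedSpace ℂ Z] [CompleteSpace Z]
    (T : X →L[ℂ] Y) (V : Z →L[ℂ] Y)
    (hrange : Set.range V ⊆ Set.range T) :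
    ∃ γ : ℝ, 0 < γ ∧ ∀ φ : StrongDual ℂ Y,
      ‖opDual V φ‖ ≤ γ * ‖opDual T φ‖ := by
  obtain ⟨C, hC, hlift⟩ := T.exists_preimage_norm_le_of_range_subset V hrange
  exact ⟨C, hC, ContinuousLinearMap.norm_comp_le_of_exists_preimage_norm_le hC.le hlift⟩

/-- If `R(V) ⊆ R(T)` then `T*` majorizes `V*`. -/
theorem range_subset_adjoint_majorize {X Y Z : Type*}
    [NormedAddCommGroup X] [NormedSpace ℂ X] [CompleteSpace X]
    [NormedAddCommGroup Y] [NormedSpace ℂ Y] [CompleteSpace Y]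
    [NormedAddCommGroup Z] [NormedSpace ℂ Z] [CompleteSpace Z]
    (T : X →L[ℂ] Y) (V : Z →L[ℂ] Y)
    (hrange : Set.range V ⊆ Set.range T) :
    ∃ γ : ℝ, 0 < γ ∧ ∀ φ : StrongDual ℂ Y,
      ‖opDual V φ‖ ≤ γ * ‖opDual T φ‖ :=
  range_subset_adjoint_majorize_general T V hrange
end

section
/- Every family of local X_d*-atoms {f_j} for X_0* is an X_d*-frame for X_0*: there exist A, B > 0 with A‖f*‖ ≤ ‖{[f_j, f]}‖_{X_d*} ≤ B‖f*‖ for all f in X_0 (where f* is the dual element of f). Indeed, if C is the Bessel-type constant for the coefficient functionals, one may take A = 1/C. -/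
open scoped ComplexConjugate
open Filter Topology

/-! Applying `f*` to the reconstruction `f = ∑ μ_j(f) f_j` and `F f` to the basis expansion of
`m f` gives the same series, so `‖f‖² = [f, f] = (F f) (m f) ≤ ‖F f‖ · C ‖f‖`. -/

theorem SumsTo.map {𝕜 E F : Type*} [NontriviallyNormedField 𝕜]
    [NormedAddCommGroup E] [NormedSpace 𝕜 E] [NormedAddCommGroup F] [NormedSpace 𝕜 F]
    {v : ℕ → E} {s : E} (h : SumsTo v s) (φ : E →L[𝕜] F) :
    SumsTo (fun j => φ (v j)) (φ s) := by
  simpa only [SumsTo, Function.comp_def, map_sum] using (φ.continuous.tendsto s).comp h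

theorem apply_eq_of_sumsTo_smul {X Y : Type*} [NormedAddCommGroup X] [NormedSpace ℂ X]
    [NormedAddCommGroup Y] [NormedSpace ℂ Y] {ψ : StrongDual ℂ X} {φ : StrongDual ℂ Y}
    {u : ℕ → X} {v : ℕ → Y} {a : ℕ → ℂ} {x : X} {y : Y}
    (hx : SumsTo (fun j => a j • u j) x) (hy : SumsTo (fun j => a j • v j) y)
    (h : ∀ j, φ (v j) = ψ (u j)) : φ y = ψ x := by
  have hφ := hy.map φ
  have hψ := hx.map ψ
  simp only [map_smul, h] at hφ hψ
  exact tendsto_nhds_unique hφ hψ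

theorem CompatSIP.norm_sq_le_of_sumsTo {X Y : Type*} [NormedAddCommGroup X] [NormedSpace ℂ X]
    [NormedAddCommGroup Y] [NormedSpace ℂ Y] (S : CompatSIP X) {φ : StrongDual ℂ Y}
    {u : ℕ → X} {v : ℕ → Y} {a : ℕ → ℂ} {x : X} {y : Y}
    (hx : SumsTo (fun j => a j • u j) x) (hy : SumsTo (fun j => a j • v j) y)
    (h : ∀ j, φ (v j) = S.sip (u j) x) : ‖x‖ ^ 2 ≤ ‖φ‖ * ‖y‖ := by
  have hφy : φ y = (‖x‖ : ℂ) ^ 2 := by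
    rw [← S.compat x]
    exact apply_eq_of_sumsTo_smul (ψ := S.dual x) hx hy h
  calc ‖x‖ ^ 2 = ‖φ y‖ := by rw [hφy, norm_pow, Complex.norm_real, norm_norm]
    _ ≤ ‖φ‖ * ‖y‖ := φ.le_opNorm y

theorem one_div_mul_le_of_sq_le_mul {a b C : ℝ} (ha : 0 ≤ a) (hb : 0 ≤ b)
    (h : a ^ 2 ≤ b * (C * a)) : 1 / C * a ≤ b := by
  rcases le_or_gt C 0 with hC | hC
  · exact (mul_nonpos_of_nonpos_of_nonneg (one_div_nonpos.2 hC) ha).trans hb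
  rcases ha.eq_or_lt with rfl | ha
  · simpa using hb
  rw [one_div_mul_eq_div, div_le_iff₀ hC]
  nlinarith

theorem local_atoms_are_frame_general {X Xd : Type*}
    [NormedAddCommGroup X] [NormedSpace ℂ X]
    [NormedAddCommGroup Xd] [NormedSpace ℂ Xd]
    (S : CompatSIP X)
    (X0 : Submodule ℂ X)
    (fj : ℕ → X)
    (e : ℕ → Xd) (coord : ℕ → StrongDual ℂ Xd)
    (hbasis : ∀ c : Xd, SumsTo (fun j => coord j c • e j) c)
    -- `{f_j}` is an `X_d^*`-Bessel sequence: `{[f_j, f]}` is represented by `F f ∈ X_d^*`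
    (F : X → StrongDual ℂ Xd)
    (hF : ∀ (f : X) (j : ℕ), F f (e j) = S.sip (fj j) f)
    (B : ℝ) (hBessel : ∀ f : X, ‖F f‖ ≤ B * ‖f‖)
    -- local atoms: coefficient functionals `μ_j(f) = coord j (m f)`
    (m : X0 → Xd) (C : ℝ)
    (hm : ∀ f : X0, ‖m f‖ ≤ C * ‖(f : X)‖)
    (hrec : ∀ f : X0, SumsTo (fun j => coord j (m f) • fj j) (f : X)) :
    ∀ f : X0, (1 / C) * ‖(f : X)‖ ≤ ‖F (f : X)‖ ∧ ‖F (f : X)‖ ≤ B * ‖(f : X)‖ := by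
  intro f
  refine ⟨?_, hBessel f⟩
  have hsq : ‖(f : X)‖ ^ 2 ≤ ‖F f‖ * ‖m f‖ :=
    S.norm_sq_le_of_sumsTo (hrec f) (hbasis (m f)) (hF f)
  exact one_div_mul_le_of_sq_le_mul (norm_nonneg _) (norm_nonneg _)
    (hsq.trans (mul_le_mul_of_nonneg_left (hm f) (norm_nonneg _)))

/-- Every family of local `X_d^*`-atoms for `X_0^*` is an `X_d^*`-frame for `X_0^*`,
with lower bound `1/C`. -/
theorem local_atoms_are_frame {X Xd : Type*}
    [NormedAddCommGroup X] [NormedSpace ℂ X] [CompleteSpace X]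
    [StrictConvexSpace ℝ X] [TopologicalSpace.SeparableSpace X]
    [NormedAddCommGroup Xd] [NormedSpace ℂ Xd] [CompleteSpace Xd]
    (S : CompatSIP X)
    (X0 : Submodule ℂ X) (hX0 : IsClosed (X0 : Set X))
    (fj : ℕ → X)
    (e : ℕ → Xd) (coord : ℕ → StrongDual ℂ Xd)
    (hco : ∀ i j, coord i (e j) = if i = j then (1 : ℂ) else 0)
    (hbasis : ∀ c : Xd, SumsTo (fun j => coord j c • e j) c)
    -- `{f_j}` is an `X_d^*`-Bessel sequence: `{[f_j, f]}` is represented by `F f ∈ X_d^*`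
    (F : X → StrongDual ℂ Xd)
    (hF : ∀ (f : X) (j : ℕ), F f (e j) = S.sip (fj j) f)
    (B : ℝ) (hB : 0 < B) (hBessel : ∀ f : X, ‖F f‖ ≤ B * ‖f‖)
    -- local atoms: coefficient functionals `μ_j(f) = coord j (m f)`
    (m : X0 → Xd) (C : ℝ) (hC : 0 < C)
    (hm : ∀ f : X0, ‖m f‖ ≤ C * ‖(f : X)‖)
    (hrec : ∀ f : X0, SumsTo (fun j => coord j (m f) • fj j) (f : X)) :
    ∀ f : X0, (1 / C) * ‖(f : X)‖ ≤ ‖F (f : X)‖ ∧ ‖F (f : X)‖ ≤ B * ‖(f : X)‖ :=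
  local_atoms_are_frame_general S X0 fj e coord hbasis F hF B hBessel m C hm hrec
end

section
/- Let X_d be a CB-space, X a separable strictly convex Banach space with compatible semi-inner product [·,·], and {f_j} ⊆ X. If Σ_j b_j f_j converges in X for every b = {b_j} ∈ X_d and ‖Σ_j b_j f_j‖_X ≤ B‖b‖_{X_d}, then {f_j} is an X_d*-Bessel sequence for X* with bound B: for all f ∈ X, {[f_j, f]} ∈ X_d* and ‖{[f_j, f]}‖_{X_d*} ≤ B‖f*‖_{X*}. -/
open scoped ComplexConjugate
open Filter Topology

/-!
The synthesis operator `T b = Σ_j b_j f_j` is linear (as a limit of linear partial sums), bounded by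
`B`, and sends `e_j` to `f_j` by biorthogonality. Hence `F = T*(f*)` satisfies
`F(e_j) = [T e_j, f] = [f_j, f]` and `‖F‖ ≤ ‖T‖ ‖f*‖ ≤ B ‖f‖`.
-/

namespace SumsTo

variable {𝕜 X : Type*} [NormedField 𝕜] [NormedAddCommGroup X] [NormedSpace 𝕜 X]
  {v w : ℕ → X} {s t : X}

lemma unique (hs : SumsTo v s) (ht : SumsTo v t) : s = t :=
  tendsto_nhds_unique hs ht

lemma add (hs : SumsTo v s) (ht : SumsTo w t) : SumsTo (fun j => v j + w j) (s + t) := by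
  simpa only [SumsTo, Finset.sum_add_distrib] using Tendsto.add hs ht

lemma const_smul (hs : SumsTo v s) (a : 𝕜) : SumsTo (fun j => a • v j) (a • s) := by
  simpa only [SumsTo, Finset.smul_sum] using Tendsto.const_smul hs a

lemma of_hasSum (h : HasSum v s) : SumsTo v s :=
  h.tendsto_sum_nat

end SumsTo

lemma CompatSIP.norm_dual_le {X : Type*} [NormedAddCommGroup X] [NormedSpace ℂ X]
    (S : CompatSIP X) (f : X) : ‖S.dual f‖ ≤ ‖f‖ :=
  LinearMap.mkContinuous_norm_le _ (norm_nonneg f) _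

lemma norm_opDual_le {X Y : Type*} [NormedAddCommGroup X] [NormedSpace ℂ X]
    [NormedAddCommGroup Y] [NormedSpace ℂ Y] (T : X →L[ℂ] Y) : ‖opDual T‖ ≤ ‖T‖ :=
  LinearMap.mkContinuous_norm_le _ (norm_nonneg T) _

section Synthesis

variable {𝕜 Xd X : Type*} [NontriviallyNormedField 𝕜]
  [NormedAddCommGroup Xd] [NormedSpace 𝕜 Xd] [NormedAddCommGroup X] [NormedSpace 𝕜 X]
  {coord : ℕ → StrongDual 𝕜 Xd} {fj : ℕ → X} {U : Xd → X}

noncomputable def synthesisOp (hU : ∀ b, SumsTo (fun j => coord j b • fj j) (U b)) (B : ℝ)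
    (hUb : ∀ b, ‖U b‖ ≤ B * ‖b‖) : Xd →L[𝕜] X :=
  LinearMap.mkContinuous
    { toFun := U
      map_add' := fun b c => (hU (b + c)).unique <| by
        simpa only [map_add, add_smul] using (hU b).add (hU c)
      map_smul' := fun a b => (hU (a • b)).unique <| by
        simpa only [map_smul, smul_assoc, RingHom.id_apply] using (hU b).const_smul a }
    B hUb

variable (hU : ∀ b, SumsTo (fun j => coord j b • fj j) (U b))
include hU

lemma norm_synthesisOp_le {B : ℝ} (hB : 0 ≤ B) (hUb : ∀ b, ‖U b‖ ≤ B * ‖b‖) :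
    ‖synthesisOp hU B hUb‖ ≤ B :=
  LinearMap.mkContinuous_norm_le _ hB _

lemma apply_eq_of_biorthogonal {e : ℕ → Xd}
    (hco : ∀ i j, coord i (e j) = if i = j then (1 : 𝕜) else 0) (j : ℕ) :
    U (e j) = fj j := by
  refine (hU (e j)).unique (SumsTo.of_hasSum ?_)
  convert hasSum_ite_eq j (fj j) using 2 with i
  rw [hco]
  split_ifs with hij
  · rw [hij, one_smul]
  · rw [zero_smul]

end Synthesis

theorem synthesis_bound_implies_Bessel_general {X Xd : Type*}
    [NormedAddCommGroup X] [NormedSpace ℂ X]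
    [NormedAddCommGroup Xd] [NormedSpace ℂ Xd]
    (S : CompatSIP X)
    (e : ℕ → Xd) (coord : ℕ → StrongDual ℂ Xd)
    (hco : ∀ i j, coord i (e j) = if i = j then (1 : ℂ) else 0)
    (fj : ℕ → X) (B : ℝ) (hB : 0 < B)
    (U : Xd → X)
    (hU : ∀ b : Xd, SumsTo (fun j => coord j b • fj j) (U b))
    (hUb : ∀ b : Xd, ‖U b‖ ≤ B * ‖b‖) :
    ∀ f : X, ∃ F : StrongDual ℂ Xd,
      (∀ j, F (e j) = S.sip (fj j) f) ∧ ‖F‖ ≤ B * ‖f‖ := by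
  intro f
  set T := synthesisOp hU B hUb
  refine ⟨opDual T (S.dual f), fun j => ?_, ?_⟩
  · change S.sip (U (e j)) f = S.sip (fj j) f
    rw [apply_eq_of_biorthogonal hU hco]
  · calc ‖opDual T (S.dual f)‖ ≤ ‖T‖ * ‖S.dual f‖ :=
          (opDual T).le_of_opNorm_le (norm_opDual_le T) _
      _ ≤ B * ‖f‖ :=
          mul_le_mul (norm_synthesisOp_le hU hB.le hUb) (S.norm_dual_le f) (norm_nonneg _) hB.le

/-- If `Σ_j b_j f_j` converges for all `b ∈ X_d` with `‖Σ_j b_j f_j‖ ≤ B‖b‖`, then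
`{f_j}` is an `X_d^*`-Bessel sequence for `X^*` with bound `B`. -/
theorem synthesis_bound_implies_Bessel {X Xd : Type*}
    [NormedAddCommGroup X] [NormedSpace ℂ X] [CompleteSpace X]
    [StrictConvexSpace ℝ X] [TopologicalSpace.SeparableSpace X]
    [NormedAddCommGroup Xd] [NormedSpace ℂ Xd] [CompleteSpace Xd]
    (S : CompatSIP X)
    (e : ℕ → Xd) (coord : ℕ → StrongDual ℂ Xd)
    (hco : ∀ i j, coord i (e j) = if i = j then (1 : ℂ) else 0)
    (hbasis : ∀ c : Xd, SumsTo (fun j => coord j c • e j) c)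
    (fj : ℕ → X) (B : ℝ) (hB : 0 < B)
    (U : Xd → X)
    (hU : ∀ b : Xd, SumsTo (fun j => coord j b • fj j) (U b))
    (hUb : ∀ b : Xd, ‖U b‖ ≤ B * ‖b‖) :
    ∀ f : X, ∃ F : StrongDual ℂ Xd,
      (∀ j, F (e j) = S.sip (fj j) f) ∧ ‖F‖ ≤ B * ‖f‖ :=
  synthesis_bound_implies_Bessel_general S e coord hco fj B hB U hU hUb
end

section
/- Suppose {f_j} is an X_d*-frame for X* and Q ∈ B(X). Then {Q f_j} is an X_d*-frame for X* if and only if the adjoint Q* is bounded below (there exists γ > 0 with ‖Q*f*‖ ≥ γ‖f*‖ for all f* ∈ X*). -/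
open scoped ComplexConjugate
open Filter Topology

/-
The coefficients of `f` with respect to `{Q f_j}` are those of `g` with respect to `{f_j}`,
where `g* = Q* f*`: indeed `[Q f_j, f] = f*(Q f_j) = (Q* f*)(f_j) = [f_j, g]`, and
`‖g‖ = ‖Q* f*‖`. Since the coefficient functional is unique (the `e j` form a basis), the frame
bounds for `{Q f_j}` at `f` are the frame bounds for `{f_j}` at `g`, and comparing them with
`‖f‖ = ‖f*‖` gives lower bounds for `Q*` and conversely.
-/

section Basis

variable {𝕜 E Y : Type*} [NormedField 𝕜] [NormedAddCommGroup E] [NormedSpace 𝕜 E]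
  [TopologicalSpace Y] [AddCommMonoid Y] [Module 𝕜 Y] [T2Space Y]

theorem ContinuousLinearMap.ext_of_sumsTo {e : ℕ → E} {a : ℕ → E → 𝕜}
    (hbasis : ∀ c : E, SumsTo (fun j => a j c • e j) c) {F G : E →L[𝕜] Y}
    (h : ∀ j, F (e j) = G (e j)) : F = G := by
  ext c
  have hF := (F.continuous.tendsto c).comp (hbasis c)
  have hG := (G.continuous.tendsto c).comp (hbasis c)
  have hFG : (F ∘ fun n => ∑ j ∈ Finset.range n, a j c • e j) =
      (G ∘ fun n => ∑ j ∈ Finset.range n, a j c • e j) := by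
    funext n
    simp only [Function.comp_apply, map_sum, map_smul, h]
  exact tendsto_nhds_unique (hFG ▸ hF) hG

end Basis

namespace CompatSIP

variable {X : Type*} [NormedAddCommGroup X] [NormedSpace ℂ X] (S : CompatSIP X)

theorem dual_apply (f g : X) : S.dual f g = S.sip g f := rfl

theorem norm_dual (f : X) : ‖S.dual f‖ = ‖f‖ := by
  refine le_antisymm (LinearMap.mkContinuous_norm_le _ (norm_nonneg f) _) ?_
  rcases eq_or_ne f 0 with rfl | hf
  · simp
  have hff : ‖S.dual f f‖ = ‖f‖ * ‖f‖ := by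
    rw [dual_apply, S.compat]
    simp [sq]
  have := (S.dual f).le_opNorm f
  rw [hff] at this
  exact le_of_mul_le_mul_right this (norm_pos_iff.mpr hf)

theorem exists_sip_map_eq (hsurj : Function.Surjective S.dual) (Q : X →L[ℂ] X) (f : X) :
    ∃ g : X, (∀ x, S.sip (Q x) f = S.sip x g) ∧ ‖g‖ = ‖opDual Q (S.dual f)‖ := by
  obtain ⟨g, hg⟩ := hsurj (opDual Q (S.dual f))
  refine ⟨g, fun x => ?_, by rw [← hg, norm_dual]⟩
  rw [← S.dual_apply g x, hg]
  rfl

variable {Xd : Type*} [NormedAddCommGroup Xd] [NormedSpace ℂ Xd]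

/-- The sequence `([v j, f])_j` lies in `X_d*` when it is the sequence of values on the basis `e`
of a functional on `X_d`. -/
def IsDualFrame (e : ℕ → Xd) (v : ℕ → X) (A B : ℝ) : Prop :=
  0 < A ∧ 0 < B ∧ ∀ f : X, ∃ F : StrongDual ℂ Xd,
    (∀ j, F (e j) = S.sip (v j) f) ∧ A * ‖f‖ ≤ ‖F‖ ∧ ‖F‖ ≤ B * ‖f‖

variable {S} {e : ℕ → Xd} {v : ℕ → X} {A B : ℝ}

theorem IsDualFrame.adjoint_boundedBelow (hsurj : Function.Surjective S.dual)
    {a : ℕ → Xd → ℂ} (hbasis : ∀ c : Xd, SumsTo (fun j => a j c • e j) c)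
    (hv : S.IsDualFrame e v A B) {Q : X →L[ℂ] X} {A' B' : ℝ}
    (hQv : S.IsDualFrame e (fun j => Q (v j)) A' B') (φ : StrongDual ℂ X) :
    A' / B * ‖φ‖ ≤ ‖opDual Q φ‖ := by
  obtain ⟨f, rfl⟩ := hsurj φ
  obtain ⟨g, hsip, hg⟩ := S.exists_sip_map_eq hsurj Q f
  obtain ⟨G, hGe, -, hGB⟩ := hv.2.2 g
  obtain ⟨F, hFe, hFA, -⟩ := hQv.2.2 f
  have hFG : F = G := ContinuousLinearMap.ext_of_sumsTo hbasis fun j => by rw [hFe, hGe, hsip]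
  rw [S.norm_dual, div_mul_eq_mul_div, div_le_iff₀ hv.2.1, ← hg, mul_comm ‖g‖]
  calc A' * ‖f‖ ≤ ‖F‖ := hFA
    _ ≤ B * ‖g‖ := hFG ▸ hGB

theorem IsDualFrame.map_of_adjoint_boundedBelow (hsurj : Function.Surjective S.dual)
    (hv : S.IsDualFrame e v A B) {Q : X →L[ℂ] X} {γ : ℝ} (hγ : 0 < γ)
    (hQ : ∀ φ : StrongDual ℂ X, γ * ‖φ‖ ≤ ‖opDual Q φ‖) :
    S.IsDualFrame e (fun j => Q (v j)) (A * γ) (B * (‖opDual Q‖ + 1)) := by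
  refine ⟨mul_pos hv.1 hγ, by have := hv.2.1; positivity, fun f => ?_⟩
  obtain ⟨g, hsip, hg⟩ := S.exists_sip_map_eq hsurj Q f
  obtain ⟨F, hFe, hFA, hFB⟩ := hv.2.2 g
  have hlower : γ * ‖f‖ ≤ ‖g‖ := by simpa only [S.norm_dual, hg] using hQ (S.dual f)
  have hupper : ‖g‖ ≤ (‖opDual Q‖ + 1) * ‖f‖ := by
    have := (opDual Q).le_opNorm (S.dual f)
    rw [S.norm_dual, ← hg] at this
    nlinarith [norm_nonneg f]
  refine ⟨F, fun j => by rw [hFe, hsip], ?_, ?_⟩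
  · calc A * γ * ‖f‖ = A * (γ * ‖f‖) := mul_assoc _ _ _
      _ ≤ A * ‖g‖ := by gcongr; exact hv.1.le
      _ ≤ ‖F‖ := hFA
  · calc ‖F‖ ≤ B * ‖g‖ := hFB
      _ ≤ B * ((‖opDual Q‖ + 1) * ‖f‖) := by gcongr; exact hv.2.1.le
      _ = B * (‖opDual Q‖ + 1) * ‖f‖ := (mul_assoc _ _ _).symm

end CompatSIP

theorem image_frame_iff_adjoint_bounded_below_general {X Xd : Type*}
    [NormedAddCommGroup X] [NormedSpace ℂ X]
    [NormedAddCommGroup Xd] [NormedSpace ℂ Xd]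
    (S : CompatSIP X) (hsurj : Function.Surjective S.dual)
    (e : ℕ → Xd) (coord : ℕ → StrongDual ℂ Xd)
    (hbasis : ∀ c : Xd, SumsTo (fun j => coord j c • e j) c)
    (fj : ℕ → X) (Q : X →L[ℂ] X)
    (hframe : ∃ A B : ℝ, 0 < A ∧ 0 < B ∧ ∀ f : X, ∃ F : StrongDual ℂ Xd,
      (∀ j, F (e j) = S.sip (fj j) f) ∧ A * ‖f‖ ≤ ‖F‖ ∧ ‖F‖ ≤ B * ‖f‖) :
    (∃ A B : ℝ, 0 < A ∧ 0 < B ∧ ∀ f : X, ∃ F : StrongDual ℂ Xd,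
      (∀ j, F (e j) = S.sip (Q (fj j)) f) ∧ A * ‖f‖ ≤ ‖F‖ ∧ ‖F‖ ≤ B * ‖f‖) ↔
    (∃ γ : ℝ, 0 < γ ∧ ∀ φ : StrongDual ℂ X, γ * ‖φ‖ ≤ ‖opDual Q φ‖) := by
  obtain ⟨A, B, hframe⟩ := hframe
  have hv : S.IsDualFrame e fj A B := hframe
  constructor
  · rintro ⟨A', B', hQv⟩
    exact ⟨A' / B, div_pos hQv.1 hv.2.1, hv.adjoint_boundedBelow hsurj hbasis hQv⟩
  · rintro ⟨γ, hγ, hQ⟩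
    exact ⟨_, _, hv.map_of_adjoint_boundedBelow hsurj hγ hQ⟩

/-- For an `X_d^*`-frame `{f_j}` and `Q ∈ B(X)`: `{Q f_j}` is an `X_d^*`-frame
iff `Q^*` is bounded below. -/
theorem image_frame_iff_adjoint_bounded_below {X Xd : Type*}
    [NormedAddCommGroup X] [NormedSpace ℂ X] [CompleteSpace X]
    [StrictConvexSpace ℝ X] [TopologicalSpace.SeparableSpace X]
    [NormedAddCommGroup Xd] [NormedSpace ℂ Xd] [CompleteSpace Xd]
    (S : CompatSIP X) (hsurj : Function.Surjective S.dual)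
    (e : ℕ → Xd) (coord : ℕ → StrongDual ℂ Xd)
    (hco : ∀ i j, coord i (e j) = if i = j then (1 : ℂ) else 0)
    (hbasis : ∀ c : Xd, SumsTo (fun j => coord j c • e j) c)
    (fj : ℕ → X) (Q : X →L[ℂ] X)
    (hframe : ∃ A B : ℝ, 0 < A ∧ 0 < B ∧ ∀ f : X, ∃ F : StrongDual ℂ Xd,
      (∀ j, F (e j) = S.sip (fj j) f) ∧ A * ‖f‖ ≤ ‖F‖ ∧ ‖F‖ ≤ B * ‖f‖) :
    (∃ A B : ℝ, 0 < A ∧ 0 < B ∧ ∀ f : X, ∃ F : StrongDual ℂ Xd,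
      (∀ j, F (e j) = S.sip (Q (fj j)) f) ∧ A * ‖f‖ ≤ ‖F‖ ∧ ‖F‖ ≤ B * ‖f‖) ↔
    (∃ γ : ℝ, 0 < γ ∧ ∀ φ : StrongDual ℂ X, γ * ‖φ‖ ≤ ‖opDual Q φ‖) :=
  image_frame_iff_adjoint_bounded_below_general S hsurj e coord hbasis fj Q hframe
end

section
/- Let {f_j} be an X_d*-K-frame for X* with bounds A, B, and let S = U Φ T be its X_d*-K-frame operator, where U is the synthesis operator, T the analysis operator, and Φ the (single-valued) duality mapping on X_d*. Then for all f ∈ X: A²‖K*f*‖² ≤ [Sf*, f] ≤ B²‖f*‖², and indeed [Sf*, f] = ‖{[f_j, f]}‖²_{X_d*}. -/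
open scoped ComplexConjugate
open Filter Topology

/-!
Both `T f*` and `U* f* = f* ∘ U` send the basis vector `e j` to `[f_j, f]`, so they agree on
`X_d`. Hence `[S f*, f] = f*(U Φ(T f*)) = (T f*)(Φ(T f*)) = ‖T f*‖²`, and the two bounds are the
squared frame inequalities.
-/

theorem ContinuousLinearMap.ext_of_sumsTo_basis {R E F : Type*} [Semiring R]
    [NormedAddCommGroup E] [Module R E]
    [TopologicalSpace F] [AddCommMonoid F] [Module R F] [T2Space F]
    (e : ℕ → E) (coord : ℕ → E → R) (hbasis : ∀ c : E, SumsTo (fun j => coord j c • e j) c)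
    {φ ψ : E →L[R] F} (h : ∀ j, φ (e j) = ψ (e j)) : φ = ψ := by
  ext c
  have hφ := (φ.continuous.tendsto c).comp (hbasis c)
  have hψ := (ψ.continuous.tendsto c).comp (hbasis c)
  simp only [Function.comp_def, map_sum, map_smul, h] at hφ hψ
  exact tendsto_nhds_unique hφ hψ

@[simp] lemma CompatSIP.dual_apply_s16 {X : Type*} [NormedAddCommGroup X] [NormedSpace ℂ X]
    (S : CompatSIP X) (f g : X) : S.dual f g = S.sip g f := rfl

lemma analysis_dual_eq_opDual_synthesis {X Xd : Type*}
    [NormedAddCommGroup X] [NormedSpace ℂ X] [NormedAddCommGroup Xd] [NormedSpace ℂ Xd]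
    (S : CompatSIP X) (e : ℕ → Xd) (coord : ℕ → Xd → ℂ)
    (hbasis : ∀ c : Xd, SumsTo (fun j => coord j c • e j) c) (fj : ℕ → X)
    (T : StrongDual ℂ X →L[ℂ] StrongDual ℂ Xd)
    (hT : ∀ (f : X) (j : ℕ), T (S.dual f) (e j) = S.sip (fj j) f)
    (U : Xd →L[ℂ] X) (hU : ∀ j, U (e j) = fj j) (f : X) :
    T (S.dual f) = opDual U (S.dual f) :=
  ContinuousLinearMap.ext_of_sumsTo_basis e coord hbasis fun j => by
    rw [hT, opDual_apply, hU, CompatSIP.dual_apply_s16]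

theorem frame_operator_bounds_general {X Xd : Type*}
    [NormedAddCommGroup X] [NormedSpace ℂ X]
    [NormedAddCommGroup Xd] [NormedSpace ℂ Xd]
    (S : CompatSIP X)
    (e : ℕ → Xd) (coord : ℕ → StrongDual ℂ Xd)
    (hbasis : ∀ c : Xd, SumsTo (fun j => coord j c • e j) c)
    (fj : ℕ → X) (K : X →L[ℂ] X)
    -- analysis operator
    (T : StrongDual ℂ X →L[ℂ] StrongDual ℂ Xd)
    (hT : ∀ (f : X) (j : ℕ), T (S.dual f) (e j) = S.sip (fj j) f)
    -- synthesis operator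
    (U : Xd →L[ℂ] X) (hU : ∀ j, U (e j) = fj j)
    -- duality mapping on `X_d^*` (values in `X_d ≅ X_d^{**}`)
    (Φ : StrongDual ℂ Xd → Xd)
    (hΦ1 : ∀ F : StrongDual ℂ Xd, F (Φ F) = (‖F‖ : ℂ) ^ 2)
    -- frame bounds
    (A B : ℝ) (hA : 0 < A)
    (hframe : ∀ f : X,
      A * ‖opDual K (S.dual f)‖ ≤ ‖T (S.dual f)‖ ∧ ‖T (S.dual f)‖ ≤ B * ‖f‖) :
    ∀ f : X,
      S.sip (U (Φ (T (S.dual f)))) f = (‖T (S.dual f)‖ : ℂ) ^ 2 ∧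
      A ^ 2 * ‖opDual K (S.dual f)‖ ^ 2 ≤ ‖T (S.dual f)‖ ^ 2 ∧
      ‖T (S.dual f)‖ ^ 2 ≤ B ^ 2 * ‖f‖ ^ 2 := by
  intro f
  obtain ⟨hlower, hupper⟩ := hframe f
  have hTU := analysis_dual_eq_opDual_synthesis S e (fun j => coord j) hbasis fj T hT U hU f
  refine ⟨?_, ?_, ?_⟩
  · calc S.sip (U (Φ (T (S.dual f)))) f = opDual U (S.dual f) (Φ (T (S.dual f))) := rfl
      _ = (‖T (S.dual f)‖ : ℂ) ^ 2 := by rw [← hTU, hΦ1]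
  · rw [← mul_pow]
    exact pow_le_pow_left₀ (by positivity) hlower 2
  · rw [← mul_pow]
    exact pow_le_pow_left₀ (norm_nonneg _) hupper 2

/-- For the `X_d^*`-`K`-frame operator `S = UΦT` one has
`[Sf^*, f] = ‖{[f_j,f]}‖²` and `A²‖K^*f^*‖² ≤ [Sf^*, f] ≤ B²‖f^*‖²`. -/
theorem frame_operator_bounds {X Xd : Type*}
    [NormedAddCommGroup X] [NormedSpace ℂ X] [CompleteSpace X]
    [StrictConvexSpace ℝ X] [TopologicalSpace.SeparableSpace X]
    [NormedAddCommGroup Xd] [NormedSpace ℂ Xd] [CompleteSpace Xd]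
    [UniformConvexSpace Xd]
    (S : CompatSIP X)
    (e : ℕ → Xd) (coord : ℕ → StrongDual ℂ Xd)
    (hco : ∀ i j, coord i (e j) = if i = j then (1 : ℂ) else 0)
    (hbasis : ∀ c : Xd, SumsTo (fun j => coord j c • e j) c)
    (fj : ℕ → X) (K : X →L[ℂ] X)
    -- analysis operator
    (T : StrongDual ℂ X →L[ℂ] StrongDual ℂ Xd)
    (hT : ∀ (f : X) (j : ℕ), T (S.dual f) (e j) = S.sip (fj j) f)
    -- synthesis operator
    (U : Xd →L[ℂ] X) (hU : ∀ j, U (e j) = fj j)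
    -- duality mapping on `X_d^*` (values in `X_d ≅ X_d^{**}`)
    (Φ : StrongDual ℂ Xd → Xd)
    (hΦ1 : ∀ F : StrongDual ℂ Xd, F (Φ F) = (‖F‖ : ℂ) ^ 2)
    (hΦ2 : ∀ F : StrongDual ℂ Xd, ‖Φ F‖ = ‖F‖)
    -- frame bounds
    (A B : ℝ) (hA : 0 < A) (hB : 0 < B)
    (hframe : ∀ f : X,
      A * ‖opDual K (S.dual f)‖ ≤ ‖T (S.dual f)‖ ∧ ‖T (S.dual f)‖ ≤ B * ‖f‖) :
    ∀ f : X,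
      S.sip (U (Φ (T (S.dual f)))) f = (‖T (S.dual f)‖ : ℂ) ^ 2 ∧
      A ^ 2 * ‖opDual K (S.dual f)‖ ^ 2 ≤ ‖T (S.dual f)‖ ^ 2 ∧
      ‖T (S.dual f)‖ ^ 2 ≤ B ^ 2 * ‖f‖ ^ 2 :=
  frame_operator_bounds_general S e coord hbasis fj K T hT U hU Φ hΦ1 A B hA hframe
end
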